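/- Let U be a finite set of unit vectors in ℝ² with pos(U) = ℝ², and let u ∈ U_□ (i.e., no v, w ∈ U satisfy pos{u,v,w} = ℝ²). Then there exists an open hemisphere ω ⊂ S¹ (i.e., ω = {x ∈ S¹ : ⟨x, c⟩ < 0} for some unit vector c) such that U ∩ ω = {−u}. In particular, −u ∈ U. -/

import Mathlib

open RealInnerProductSpace

noncomputable section

abbrev V2 : Type := EuclideanSpace ℝ (Fin 2)

/-- The positive hull: all nonnegative linear combinations of elements of `M`. -/
def pos {E : Type*} [AddCommMonoid E] [Module ℝ E] (M : Set E) : Set E :=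
  {x | ∃ (s : Finset E) (c : E → ℝ),
    (↑s : Set E) ⊆ M ∧ (∀ v, 0 ≤ c v) ∧ x = ∑ v ∈ s, c v • v}

/-!
Orient the plane and write `ω` for its area form. Since `pos U = ℝ²`, some `v ∈ U` has
`ω u v > 0`; among these let `m` minimise `⟪u, m⟫`, i.e. be the farthest from `u`
counterclockwise. Every `v ∈ U` other than `-u` lies on the closed side `ω v m ≥ 0` of the line
through `m`: for `ω u v > 0` by the choice of `m`, for `ω u v = 0` because then `v = u`, and for
`ω u v < 0` because otherwise `ω u m, ω m v, ω v u > 0`, and three such vectors positively span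
the plane. So the open half-plane `ω x m < 0` meets `U` at most in `-u`, and it meets `U` because
`U` positively spans.
-/

open Module

theorem smul_add_smul_add_smul_mem_pos {E : Type*} [AddCommMonoid E] [Module ℝ E]
    {u v w : E} (huv : u ≠ v) (huw : u ≠ w) (hvw : v ≠ w) {a b c : ℝ}
    (ha : 0 ≤ a) (hb : 0 ≤ b) (hc : 0 ≤ c) : a • u + b • v + c • w ∈ pos {u, v, w} := by
  classical
  refine ⟨{u, v, w}, fun x => if x = u then a else if x = v then b else if x = w then c else 0,
    by simp, fun x => by dsimp only; split_ifs <;> first | assumption | exact le_rfl, ?_⟩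
  simp [Finset.sum_insert, huv, huw, hvw, huv.symm, huw.symm, hvw.symm, add_assoc]

section InnerProductSpace

variable {E : Type*} [NormedAddCommGroup E] [InnerProductSpace ℝ E]

theorem inner_nonneg_of_mem_pos {M : Set E} {g z : E} (hM : ∀ v ∈ M, 0 ≤ ⟪v, g⟫)
    (hz : z ∈ pos M) : 0 ≤ ⟪z, g⟫ := by
  obtain ⟨s, c, hs, hc, rfl⟩ := hz
  rw [sum_inner]
  exact Finset.sum_nonneg fun v hv => by
    rw [real_inner_smul_left]; exact mul_nonneg (hc v) (hM v (hs hv))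

theorem exists_inner_neg_of_pos_eq_univ {M : Set E} (hM : pos M = Set.univ) {g : E}
    (hg : g ≠ 0) : ∃ v ∈ M, ⟪v, g⟫ < 0 := by
  by_contra! h
  have h' := inner_nonneg_of_mem_pos h (hM ▸ Set.mem_univ (-g))
  rw [inner_neg_left, real_inner_self_eq_norm_sq] at h'
  have := norm_pos_iff.2 hg
  nlinarith

end InnerProductSpace

theorem mul_sub_mul_nonneg_of_sq_add_sq_eq_one {x₁ y₁ x₂ y₂ : ℝ} (h₁ : x₁ ^ 2 + y₁ ^ 2 = 1)
    (h₂ : x₂ ^ 2 + y₂ ^ 2 = 1) (hy : 0 < y₁ + y₂) (hx : x₂ ≤ x₁) :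
    0 ≤ x₁ * y₂ - y₁ * x₂ := by
  have hprod : (x₁ * y₂ - y₁ * x₂) * (y₁ + y₂) * 2
      = (x₁ - x₂) * ((x₁ + x₂) ^ 2 + (y₁ + y₂) ^ 2) := by
    linear_combination (x₁ + x₂) * (h₂ - h₁)
  nlinarith [sq_nonneg (x₁ + x₂), sq_nonneg (y₁ + y₂)]

namespace Orientation

variable {E : Type*} [NormedAddCommGroup E] [InnerProductSpace ℝ E] [Fact (finrank ℝ E = 2)]
  (o : Orientation ℝ E (Fin 2))

local notation "ω" => o.areaForm
local notation "J" => o.rightAngleRotation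

theorem norm_sq_smul_eq_inner_smul_add_areaForm_smul (a x : E) :
    ‖a‖ ^ 2 • x = ⟪a, x⟫ • a + ω a x • J a := by
  refine ext_inner_right ℝ fun s => ?_
  simp only [inner_add_left, real_inner_smul_left, o.inner_rightAngleRotation_left]
  exact (o.inner_mul_inner_add_areaForm_mul_areaForm a x s).symm

theorem areaForm_smul_eq_add (x y z : E) : ω x y • z = ω z y • x + ω x z • y := by
  rcases eq_or_ne x 0 with rfl | hx
  · simp
  apply smul_right_injective E (pow_ne_zero 2 (norm_ne_zero_iff.2 hx))
  have hz := o.norm_sq_smul_eq_inner_smul_add_areaForm_smul x z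
  have hy := o.norm_sq_smul_eq_inner_smul_add_areaForm_smul x y
  have h := o.inner_mul_areaForm_sub x z y
  dsimp only
  linear_combination (norm := module) ω x y • hz - ω x z • hy + h • x

theorem pos_eq_univ_of_areaForm_pos {u v w : E} (h₁ : 0 < ω u v) (h₂ : 0 < ω v w)
    (h₃ : 0 < ω w u) : pos {u, v, w} = Set.univ := by
  have hne : ∀ {x y : E}, 0 < ω x y → x ≠ y := by
    rintro x _ h rfl
    simp at h
  refine Set.eq_univ_of_forall fun z => ?_
  -- `z` is a combination of `v` and `w`; adding a large multiple of the positive relation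
  -- `ω v w • u + ω w u • v + ω u v • w = 0` makes all coefficients nonnegative.
  set t := |ω z w| / ω w u + |ω v z| / ω u v
  have ht : 0 ≤ t := by positivity
  have htv : |ω z w| ≤ t * ω w u := by
    have : 0 ≤ |ω v z| / ω u v * ω w u := by positivity
    rw [add_mul, div_mul_cancel₀ _ h₃.ne']
    linarith
  have htw : |ω v z| ≤ t * ω u v := by
    have : 0 ≤ |ω z w| / ω w u * ω u v := by positivity
    rw [add_mul, div_mul_cancel₀ _ h₁.ne']
    linarith
  have ha : ω v w ≠ 0 := h₂.ne'
  have hrel := o.areaForm_smul_eq_add v w u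
  have hz := o.areaForm_smul_eq_add v w z
  rw [o.areaForm_swap u w, o.areaForm_swap v u] at hrel
  have hcomb : z = t • u + ((ω v w)⁻¹ * (ω z w + t * ω w u)) • v
      + ((ω v w)⁻¹ * (ω v z + t * ω u v)) • w := by
    apply smul_right_injective E ha
    dsimp only
    linear_combination (norm := module) hz - t • hrel
      - (mul_inv_cancel₀ ha) • ((ω z w + t * ω w u) • v + (ω v z + t * ω u v) • w)
  rw [hcomb]
  refine smul_add_smul_add_smul_mem_pos (hne h₁) (hne h₃).symm (hne h₂) ht ?_ ?_
  · exact mul_nonneg (inv_nonneg.2 h₂.le) (by linarith [neg_abs_le (ω z w)])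
  · exact mul_nonneg (inv_nonneg.2 h₂.le) (by linarith [neg_abs_le (ω v z)])

theorem exists_areaForm_pos_of_pos_eq_univ {U : Set E} (hU : pos U = Set.univ) {u : E}
    (hu : u ≠ 0) : ∃ v ∈ U, 0 < ω u v := by
  obtain ⟨v, hv, hneg⟩ := exists_inner_neg_of_pos_eq_univ hU (g := -J u) (by simpa using hu)
  refine ⟨v, hv, ?_⟩
  rw [inner_neg_right, o.inner_rightAngleRotation_right, o.areaForm_swap] at hneg
  linarith

theorem eq_or_eq_neg_of_areaForm_eq_zero {u v : E} (hu : ‖u‖ = 1) (hv : ‖v‖ = 1)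
    (h : ω u v = 0) : v = u ∨ v = -u := by
  have hsq := o.inner_sq_add_areaForm_sq u v
  rw [h, hu, hv] at hsq
  rcases sq_eq_one_iff.mp (by linarith : ⟪u, v⟫ ^ 2 = 1) with h1 | h1
  · exact Or.inl ((inner_eq_one_iff_of_norm_eq_one (𝕜 := ℝ) hu hv).1 h1).symm
  · exact Or.inr (by rw [(inner_eq_neg_one_iff_of_norm_eq_one (𝕜 := ℝ) hu hv).1 h1, neg_neg])

theorem areaForm_nonneg_of_inner_le {u v m : E} (hu : ‖u‖ = 1) (hv : ‖v‖ = 1) (hm : ‖m‖ = 1)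
    (hv₀ : 0 ≤ ω u v) (hm₀ : 0 < ω u m) (h : ⟪u, m⟫ ≤ ⟪u, v⟫) : 0 ≤ ω v m := by
  have hvm := o.inner_mul_areaForm_sub u v m
  have hv₁ := o.inner_sq_add_areaForm_sq u v
  have hm₁ := o.inner_sq_add_areaForm_sq u m
  simp only [hu, hv, hm, one_pow, one_mul] at hvm hv₁ hm₁
  rw [← hvm]
  exact mul_sub_mul_nonneg_of_sq_add_sq_eq_one hv₁ hm₁ (by linarith) h

theorem areaForm_nonneg_of_isMinOn {U : Set E} (hunit : ∀ v ∈ U, ‖v‖ = 1) {u m v : E}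
    (hu : u ∈ U) (hmU : m ∈ U) (hv : v ∈ U)
    (hsq : ¬ ∃ v ∈ U, ∃ w ∈ U, pos {u, v, w} = Set.univ) (hm : 0 < ω u m)
    (hmin : IsMinOn (⟪u, ·⟫) {v ∈ U | 0 < ω u v} m) (hvu : v ≠ -u) : 0 ≤ ω v m := by
  rcases lt_trichotomy (ω u v) 0 with hneg | hzero | hpos
  · by_contra! h
    refine hsq ⟨m, hmU, v, hv, o.pos_eq_univ_of_areaForm_pos hm ?_ ?_⟩
    · rw [o.areaForm_swap]; linarith
    · rw [o.areaForm_swap]; linarith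
  · rcases o.eq_or_eq_neg_of_areaForm_eq_zero (hunit u hu) (hunit v hv) hzero with rfl | rfl
    · exact hm.le
    · exact absurd rfl hvu
  · exact o.areaForm_nonneg_of_inner_le (hunit u hu) (hunit v hv) (hunit m hmU) hpos.le hm
      (hmin ⟨hv, hpos⟩)

end Orientation

theorem exists_inter_halfspace_eq_singleton_neg {E : Type*} [NormedAddCommGroup E]
    [InnerProductSpace ℝ E] [Fact (finrank ℝ E = 2)] {U : Set E} (hfin : U.Finite)
    (hunit : ∀ v ∈ U, ‖v‖ = 1) (hpos : pos U = Set.univ) {u : E} (hu : u ∈ U)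
    (hsq : ¬ ∃ v ∈ U, ∃ w ∈ U, pos {u, v, w} = Set.univ) :
    ∃ c : E, ‖c‖ = 1 ∧ U ∩ {x | ⟪x, c⟫ < 0} = {-u} := by
  have : FiniteDimensional ℝ E := .of_fact_finrank_eq_two
  let o : Orientation ℝ E (Fin 2) := (finBasisOfFinrankEq ℝ E Fact.out).orientation
  have hu₀ : u ≠ 0 := by
    rintro rfl
    simpa using hunit 0 hu
  obtain ⟨p, hpU, hp⟩ := o.exists_areaForm_pos_of_pos_eq_univ hpos hu₀
  obtain ⟨m, ⟨hmU, hm⟩, hmin⟩ := Set.exists_min_image {v ∈ U | 0 < o.areaForm u v} (⟪u, ·⟫)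
    (hfin.subset fun _ h => h.1) ⟨p, hpU, hp⟩
  have hright : ∀ v ∈ U, v ≠ -u → 0 ≤ o.areaForm v m := fun v hv hvu =>
    o.areaForm_nonneg_of_isMinOn hunit hu hmU hv hsq hm (isMinOn_iff.2 hmin) hvu
  have hinner : ∀ x, ⟪x, -o.rightAngleRotation m⟫ = o.areaForm x m := by
    simp [o.inner_rightAngleRotation_right]
  have hnegu : -u ∈ U := by
    by_contra h
    obtain ⟨v, hv, hvm⟩ := exists_inner_neg_of_pos_eq_univ hpos (g := -o.rightAngleRotation m)
      (by simp [← norm_ne_zero_iff, hunit m hmU])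
    rw [hinner] at hvm
    exact hvm.not_ge (hright v hv fun e => h (e ▸ hv))
  refine ⟨-o.rightAngleRotation m, by simp [hunit m hmU], ?_⟩
  ext x
  simp only [Set.mem_inter_iff, Set.mem_ofPred_eq, Set.mem_singleton_iff, hinner]
  constructor
  · rintro ⟨hx, hxm⟩
    by_contra hne
    exact hxm.not_ge (hright x hx hne)
  · rintro rfl
    exact ⟨hnegu, by simpa using hm⟩

theorem stmt3 (U : Set V2) (hfin : U.Finite) (hunit : ∀ v ∈ U, ‖v‖ = 1)
    (hpos : pos U = Set.univ) (u : V2) (hu : u ∈ U)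
    (hsq : ¬ ∃ v ∈ U, ∃ w ∈ U, pos {u, v, w} = Set.univ) :
    (∃ c : V2, ‖c‖ = 1 ∧ U ∩ {x | (inner ℝ x c : ℝ) < 0} = {-u}) ∧ -u ∈ U := by
  have : Fact (finrank ℝ V2 = 2) := ⟨finrank_euclideanSpace_fin⟩
  obtain ⟨c, hc, hU⟩ := exists_inter_halfspace_eq_singleton_neg hfin hunit hpos hu hsq
  have hneg : -u ∈ U ∩ {x | ⟪x, c⟫ < 0} := hU ▸ Set.mem_singleton (-u)
  exact ⟨⟨c, hc, hU⟩, hneg.1⟩
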